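/- Scaling-up of Pólya noise under dropouts: if only (1−δ)·n of n clients each contribute independent (X_i − Y_i) with X_i, Y_i ~ Pólya(1/((1−δ)n), β) independently, then the sum of the surviving clients' noise shares is distributed as the discrete Laplace distribution P(Z = k) = ((1−β)/(1+β))·β^{|k|}. -/

import Mathlib

/-!
The Pólya pmf is `multichoose α k · β ^ k · (1 - β) ^ α`, so the Chu–Vandermonde identity for
`Ring.multichoose` shows that Pólya laws with a common `β` convolve by adding their `α`. Hence the
total of the `s` independent shares `Xᵢ`, each Pólya(1/s, β), is Pólya(1, β), i.e. geometric
with `P(k) = (1 - β) β ^ k`, and likewise for the `Yᵢ`. The two totals are independent, and the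
difference of two independent geometric variables is discrete Laplace:
`∑ⱼ (1 - β)² β ^ (2j + k) = (1 - β) / (1 + β) · β ^ k`.
-/

open MeasureTheory

/-- Pólya(α, β) pmf at k ∈ ℕ. -/
noncomputable def polyaPMF (α β : ℝ) (k : ℕ) : ℝ :=
  (Real.Gamma (α + k) / (Real.Gamma α * (Nat.factorial k))) * β ^ k * (1 - β) ^ α

open ProbabilityTheory Finset

theorem Ring.multichoose_add {R : Type*} [CommRing R] [BinomialRing R] (r s : R) (k : ℕ) :
    multichoose (r + s) k = ∑ ij ∈ antidiagonal k, multichoose r ij.1 * multichoose s ij.2 := by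
  have h (r : R) (n : ℕ) : multichoose r n = (n : ℤ).negOnePow • choose (-r) n := by
    rw [choose_neg', smul_smul, Int.units_mul_self, one_smul]
  simp only [h, neg_add, add_choose_eq k (Commute.all (-r) (-s)), smul_sum]
  refine sum_congr rfl fun ij hij => ?_
  rw [← mem_antidiagonal.mp hij, Nat.cast_add, Int.negOnePow_add, smul_mul_smul_comm]

theorem Real.Gamma_add_nat_eq_ascPochhammer_mul {a : ℝ} (ha : ∀ m : ℕ, a ≠ -m) (k : ℕ) :
    Gamma (a + k) = (ascPochhammer ℝ k).eval a * Gamma a := by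
  induction k with
  | zero => simp
  | succ k ih =>
    have hk : a + k ≠ 0 := fun h => ha k (by linarith)
    rw [Nat.cast_succ, ← add_assoc, Gamma_add_one hk, ih, ascPochhammer_succ_eval]
    ring

theorem Ring.multichoose_eq_ascPochhammer_div {K : Type*} [Field K] [CharZero K] (a : K)
    (k : ℕ) :
    multichoose a k = (ascPochhammer K k).eval a / k.factorial := by
  rw [eq_div_iff (Nat.cast_ne_zero.mpr k.factorial_ne_zero),
    ← Polynomial.ascPochhammer_smeval_eq_eval, ← factorial_nsmul_multichoose_eq_ascPochhammer,
    nsmul_eq_mul, mul_comm]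

theorem polyaPMF_eq_multichoose {a : ℝ} (ha : ∀ m : ℕ, a ≠ -m) (β : ℝ) (k : ℕ) :
    polyaPMF a β k = Ring.multichoose a k * β ^ k * (1 - β) ^ a := by
  have hΓ := Real.Gamma_ne_zero ha
  rw [polyaPMF, Real.Gamma_add_nat_eq_ascPochhammer_mul ha, Ring.multichoose_eq_ascPochhammer_div]
  field_simp

theorem polyaPMF_one (β : ℝ) (k : ℕ) : polyaPMF 1 β k = (1 - β) * β ^ k := by
  rw [polyaPMF, add_comm, Real.Gamma_nat_eq_factorial, Real.Gamma_one, Real.rpow_one]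
  field_simp

theorem polyaPMF_nonneg {a β : ℝ} (ha : 0 < a) (hβ0 : 0 ≤ β) (hβ1 : β ≤ 1) (k : ℕ) :
    0 ≤ polyaPMF a β k := by
  have := Real.Gamma_pos_of_pos ha
  have := Real.Gamma_pos_of_pos (s := a + k) (by positivity)
  have := Real.rpow_nonneg (sub_nonneg.mpr hβ1) a
  unfold polyaPMF
  positivity

theorem sum_antidiagonal_polyaPMF_mul {a b β : ℝ} (ha : 0 < a) (hb : 0 < b) (hβ : β < 1)
    (k : ℕ) :
    ∑ ij ∈ antidiagonal k, polyaPMF a β ij.1 * polyaPMF b β ij.2 = polyaPMF (a + b) β k := by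
  have hpos {c : ℝ} (hc : 0 < c) (m : ℕ) : c ≠ -m :=
    ((neg_nonpos.mpr m.cast_nonneg).trans_lt hc).ne'
  simp only [polyaPMF_eq_multichoose (hpos ha), polyaPMF_eq_multichoose (hpos hb),
    polyaPMF_eq_multichoose (hpos (add_pos ha hb)), Ring.multichoose_add, sum_mul,
    Real.rpow_add (sub_pos.mpr hβ)]
  refine sum_congr rfl fun ij hij => ?_
  rw [← mem_antidiagonal.mp hij, pow_add]
  ring

section Probability

variable {Ω : Type*} [MeasurableSpace Ω] {μ : Measure Ω}

theorem ProbabilityTheory.IndepFun.measure_add_eq {U V : Ω → ℕ} (h : IndepFun U V μ)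
    (hU : Measurable U) (hV : Measurable V) (k : ℕ) :
    μ {ω | U ω + V ω = k} = ∑ ij ∈ antidiagonal k, μ {ω | U ω = ij.1} * μ {ω | V ω = ij.2} := by
  have hunion : {ω | U ω + V ω = k} = ⋃ ij ∈ antidiagonal k, U ⁻¹' {ij.1} ∩ V ⁻¹' {ij.2} := by
    ext ω; simp
  have hdisj : Set.PairwiseDisjoint (antidiagonal k : Set (ℕ × ℕ))
      fun ij => U ⁻¹' {ij.1} ∩ V ⁻¹' {ij.2} := by
    rintro ⟨i, j⟩ - ⟨i', j'⟩ - hne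
    refine Set.disjoint_left.mpr fun ω ⟨hi, hj⟩ ⟨hi', hj'⟩ => hne ?_
    simp_all
  rw [hunion, measure_biUnion_finset hdisj
    fun ij _ => (hU (measurableSet_singleton _)).inter (hV (measurableSet_singleton _))]
  exact sum_congr rfl fun ij _ => h.measure_inter_preimage_eq_mul _ _
    (measurableSet_singleton _) (measurableSet_singleton _)

theorem ProbabilityTheory.IndepFun.measure_natCast_sub_eq {U V : Ω → ℕ} (h : IndepFun U V μ)
    (hU : Measurable U) (hV : Measurable V) (k : ℕ) :
    μ {ω | (U ω : ℤ) - V ω = k} = ∑' j, μ {ω | U ω = j + k} * μ {ω | V ω = j} := by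
  have hunion : {ω | (U ω : ℤ) - V ω = k} = ⋃ j, U ⁻¹' {j + k} ∩ V ⁻¹' {j} := by
    ext ω
    simp only [Set.mem_ofPred_eq, Set.mem_iUnion, Set.mem_inter_iff, Set.mem_preimage,
      Set.mem_singleton_iff]
    exact ⟨fun h => ⟨V ω, by omega, rfl⟩, fun ⟨j, hU, hV⟩ => by omega⟩
  have hdisj : Pairwise (Function.onFun Disjoint fun j => U ⁻¹' {j + k} ∩ V ⁻¹' {j}) :=
    fun j j' hne => Set.disjoint_left.mpr fun ω ⟨_, hj⟩ ⟨_, hj'⟩ => hne (hj.symm.trans hj')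
  rw [hunion, measure_iUnion hdisj
    fun j => (hU (measurableSet_singleton _)).inter (hV (measurableSet_singleton _))]
  exact tsum_congr fun j => h.measure_inter_preimage_eq_mul _ _
    (measurableSet_singleton _) (measurableSet_singleton _)

theorem ProbabilityTheory.iIndepFun.measure_sum_eq_polyaPMF {ι : Type*} {Z : ι → Ω → ℕ}
    (h : iIndepFun Z μ) (hZ : ∀ i, Measurable (Z i)) {a : ι → ℝ} (ha : ∀ i, 0 < a i)
    {β : ℝ} (hβ0 : 0 ≤ β) (hβ1 : β < 1)
    (hlaw : ∀ i (k : ℕ), μ {ω | Z i ω = k} = ENNReal.ofReal (polyaPMF (a i) β k))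
    {t : Finset ι} (ht : t.Nonempty) (k : ℕ) :
    μ {ω | ∑ i ∈ t, Z i ω = k} = ENNReal.ofReal (polyaPMF (∑ i ∈ t, a i) β k) := by
  induction ht using Finset.Nonempty.cons_induction generalizing k with
  | singleton i => simpa using hlaw i k
  | cons i t hi ht ih =>
    have hindep : IndepFun (fun ω => ∑ j ∈ t, Z j ω) (Z i) μ := by
      convert h.indepFun_finsetSum_of_notMem hZ hi using 1
      exact funext fun ω => (Finset.sum_apply ..).symm
    have hpos : 0 < ∑ j ∈ t, a j := sum_pos (fun j _ => ha j) ht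
    have hnonneg {c : ℝ} (hc : 0 < c) (m : ℕ) := polyaPMF_nonneg hc hβ0 hβ1.le m
    simp only [sum_cons, add_comm (Z i _), add_comm (a i)]
    rw [hindep.measure_add_eq (Finset.measurable_sum t fun j _ => hZ j) (hZ i)]
    simp only [ih, hlaw, ← ENNReal.ofReal_mul (hnonneg hpos _)]
    rw [← sum_antidiagonal_polyaPMF_mul hpos (ha i) hβ1, ENNReal.ofReal_sum_of_nonneg
      fun _ _ => mul_nonneg (hnonneg hpos _) (hnonneg (ha i) _)]

theorem ProbabilityTheory.IndepFun.measure_natCast_sub_eq_discreteLaplace {U V : Ω → ℕ}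
    (h : IndepFun U V μ) (hU : Measurable U) (hV : Measurable V) {β : ℝ} (hβ0 : 0 ≤ β)
    (hβ1 : β < 1) (hUlaw : ∀ j : ℕ, μ {ω | U ω = j} = ENNReal.ofReal ((1 - β) * β ^ j))
    (hVlaw : ∀ j : ℕ, μ {ω | V ω = j} = ENNReal.ofReal ((1 - β) * β ^ j)) (k : ℕ) :
    μ {ω | (U ω : ℤ) - V ω = k} = ENNReal.ofReal ((1 - β) / (1 + β) * β ^ k) := by
  have hβ2 : β ^ 2 < 1 := by nlinarith
  have hterm (j : ℕ) : ENNReal.ofReal ((1 - β) * β ^ (j + k)) * ENNReal.ofReal ((1 - β) * β ^ j)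
      = ENNReal.ofReal ((1 - β) ^ 2 * β ^ k * (β ^ 2) ^ j) := by
    rw [← ENNReal.ofReal_mul (by nlinarith [pow_nonneg hβ0 (j + k)])]
    ring_nf
  have hsummable : Summable fun j : ℕ => (1 - β) ^ 2 * β ^ k * (β ^ 2) ^ j :=
    (summable_geometric_of_lt_one (by positivity) hβ2).mul_left _
  simp only [h.measure_natCast_sub_eq hU hV, hUlaw, hVlaw, hterm]
  rw [← ENNReal.ofReal_tsum_of_nonneg (fun j => by positivity) hsummable, tsum_mul_left,
    tsum_geometric_of_lt_one (by positivity) hβ2]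
  congr 1
  have : 1 - β ^ 2 ≠ 0 := by linarith
  field_simp
  ring

theorem ProbabilityTheory.iIndepFun.indepFun_sum_sum_of_bool {ι M : Type*} [Fintype ι]
    [AddCommMonoid M] [MeasurableSpace M] [MeasurableAdd₂ M] {X Y : ι → Ω → M}
    (h : iIndepFun (fun p : ι × Bool => if p.2 then X p.1 else Y p.1) μ)
    (hX : ∀ i, Measurable (X i)) (hY : ∀ i, Measurable (Y i)) :
    IndepFun (fun ω => ∑ i, X i ω) (fun ω => ∑ i, Y i ω) μ := by
  have hZ (p : ι × Bool) : Measurable (if p.2 then X p.1 else Y p.1) := by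
    cases p.2 <;> simp [hX, hY]
  have hdisj : Disjoint (univ ×ˢ {true} : Finset (ι × Bool)) (univ ×ˢ {false}) := by
    rw [disjoint_left]; simp
  exact (h.indepFun_finset _ _ hdisj hZ).comp
    (φ := fun g => ∑ i, g ⟨(i, true), by simp⟩) (ψ := fun g => ∑ i, g ⟨(i, false), by simp⟩)
    (Finset.measurable_sum _ fun i _ => measurable_pi_apply _)
    (Finset.measurable_sum _ fun i _ => measurable_pi_apply _)

end Probability

theorem stmt12_general {Ω : Type*} [MeasurableSpace Ω] (μ : Measure Ω)
    (n : ℕ) (δ : ℝ)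
    (s : ℕ) (hs : 0 < s) (hsn : (s : ℝ) = (1 - δ) * n)
    (β : ℝ) (hβ : β ∈ Set.Ioo (0 : ℝ) 1)
    (X Y : Fin s → Ω → ℕ)
    (hmeas : ∀ i, Measurable (X i) ∧ Measurable (Y i))
    (hindep : ProbabilityTheory.iIndepFun
      (fun p : Fin s × Bool => if p.2 then X p.1 else Y p.1) μ)
    (hX : ∀ i (k : ℕ), μ {ω | X i ω = k} = ENNReal.ofReal (polyaPMF (1 / ((1 - δ) * n)) β k))
    (hY : ∀ i (k : ℕ), μ {ω | Y i ω = k} = ENNReal.ofReal (polyaPMF (1 / ((1 - δ) * n)) β k)) :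
    ∀ k : ℤ, μ {ω | (∑ i, ((X i ω : ℤ) - (Y i ω : ℤ))) = k}
      = ENNReal.ofReal (((1 - β) / (1 + β)) * β ^ k.natAbs) := by
  have ha : 0 < 1 / ((1 - δ) * n) := by rw [← hsn]; positivity
  have hsum_a : ∑ _i : Fin s, 1 / ((1 - δ) * n) = (1 : ℝ) := by
    rw [sum_const, card_univ, Fintype.card_fin, nsmul_eq_mul, ← hsn]
    field_simp
  have hgeom (Z : Fin s → Ω → ℕ) (hZ : ∀ i, Measurable (Z i)) (hZind : iIndepFun Z μ)
      (hlaw : ∀ i (k : ℕ), μ {ω | Z i ω = k} = ENNReal.ofReal (polyaPMF (1 / ((1 - δ) * n)) β k))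
      (m : ℕ) : μ {ω | ∑ i, Z i ω = m} = ENNReal.ofReal ((1 - β) * β ^ m) := by
    rw [hZind.measure_sum_eq_polyaPMF hZ (fun _ => ha) hβ.1.le hβ.2 hlaw
      (univ_nonempty_iff.mpr ⟨⟨0, hs⟩⟩), hsum_a, polyaPMF_one]
  have hSX := hgeom X (fun i => (hmeas i).1)
    (hindep.precomp (g := fun i => (i, true)) fun _ _ h => (Prod.mk.inj h).1) hX
  have hSY := hgeom Y (fun i => (hmeas i).2)
    (hindep.precomp (g := fun i => (i, false)) fun _ _ h => (Prod.mk.inj h).1) hY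
  have hSind := hindep.indepFun_sum_sum_of_bool (fun i => (hmeas i).1) (fun i => (hmeas i).2)
  have hmSX : Measurable fun ω => ∑ i, X i ω := Finset.measurable_sum _ fun i _ => (hmeas i).1
  have hmSY : Measurable fun ω => ∑ i, Y i ω := Finset.measurable_sum _ fun i _ => (hmeas i).2
  have hdiff (ω : Ω) :
      ∑ i, ((X i ω : ℤ) - Y i ω) = ((∑ i, X i ω : ℕ) : ℤ) - (∑ i, Y i ω : ℕ) := by
    push_cast
    exact sum_sub_distrib ..
  intro k
  simp only [hdiff]
  rcases Int.eq_nat_or_neg k with ⟨K, rfl | rfl⟩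
  · simpa using hSind.measure_natCast_sub_eq_discreteLaplace hmSX hmSY hβ.1.le hβ.2 hSX hSY K
  · convert hSind.symm.measure_natCast_sub_eq_discreteLaplace hmSY hmSX hβ.1.le hβ.2 hSY hSX K
      using 2
    · ext ω
      simp only [Set.mem_ofPred_eq]
      omega
    · simp

/-- Scaling-up of Pólya noise under dropouts: if only (1−δ)·n of n clients survive
(with s = (1−δ)·n a positive integer), and each surviving client i contributes
X_i − Y_i with X_i, Y_i mutually independent Pólya(1/((1−δ)n), β), then the sum of the
surviving clients' noise shares is discrete Laplace:
P(Z = k) = ((1−β)/(1+β))·β^{|k|}. -/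
theorem stmt12 {Ω : Type*} [MeasurableSpace Ω] (μ : Measure Ω) [IsProbabilityMeasure μ]
    (n : ℕ) (hn : 0 < n) (δ : ℝ) (hδ : δ ∈ Set.Ico (0 : ℝ) 1)
    (s : ℕ) (hs : 0 < s) (hsn : (s : ℝ) = (1 - δ) * n)
    (β : ℝ) (hβ : β ∈ Set.Ioo (0 : ℝ) 1)
    (X Y : Fin s → Ω → ℕ)
    (hmeas : ∀ i, Measurable (X i) ∧ Measurable (Y i))
    (hindep : ProbabilityTheory.iIndepFun
      (fun p : Fin s × Bool => if p.2 then X p.1 else Y p.1) μ)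
    (hX : ∀ i (k : ℕ), μ {ω | X i ω = k} = ENNReal.ofReal (polyaPMF (1 / ((1 - δ) * n)) β k))
    (hY : ∀ i (k : ℕ), μ {ω | Y i ω = k} = ENNReal.ofReal (polyaPMF (1 / ((1 - δ) * n)) β k)) :
    ∀ k : ℤ, μ {ω | (∑ i, ((X i ω : ℤ) - (Y i ω : ℤ))) = k}
      = ENNReal.ofReal (((1 - β) / (1 + β)) * β ^ k.natAbs) :=
  stmt12_general μ n δ s hs hsn β hβ X Y hmeas hindep hX hY
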